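/- Suppose the trials i = 1,…,K are partitioned into regimes g = 1,…,G, and suppose there exists β⋆ ∈ ℝ^p such that, writing ε = y − Zβ⋆ and X = [Z A] (the K×(p+q) matrix with rows X_i), the within-regime weighted orthogonality Σ_{i ∈ g} w_i ε_i X_i = 0 holds for every regime g. Define r_i(β,γ) = y_i − Z_iᵀβ − A_iᵀγ, the average loss L_avg(β,γ) = (Σ_i w_i r_i(β,γ)²)/(Σ_i w_i), the regime losses L_g(β,γ) = (Σ_{i∈g} w_i r_i(β,γ)²)/(Σ_{i∈g} w_i), and the hard worst-regime loss L_max(β,γ) = max_{g=1,…,G} L_g(β,γ). Then for every ρ ∈ [0,1] and every λ_γ ≥ 0, the point (β⋆, 0) is a global minimizer of F(β,γ) = (1−ρ) L_avg(β,γ) + ρ L_max(β,γ) + λ_γ ‖γ‖²; moreover, if ρ < 1 and XᵀWX is positive definite, then (β⋆, 0) is the unique global minimizer of F. -/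

import Mathlib

/-!
Write `δ = (β - β⋆, γ)`, so that `r(β, γ) = ε - X δ`. Orthogonality of `ε` to the columns of `X`
within each regime (hence also over all trials) kills the cross term, so every weighted sum of
squared residuals splits as the one at `(β⋆, 0)` plus the nonnegative `Σ wᵢ ((X δ)ᵢ)²`. Each regime
loss, their maximum and the average loss are therefore minimised at `(β⋆, 0)`, as is the ridge
penalty. Positive definiteness of `XᵀWX` makes the extra term in the average loss strictly positive
for `δ ≠ 0`, and its coefficient `1 - ρ` is positive when `ρ < 1`.
-/

open Matrix

theorem Fin.dotProduct_append {α : Type*} [Mul α] [AddCommMonoid α] {m n : ℕ}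
    (u u' : Fin m → α) (v v' : Fin n → α) :
    Fin.append u v ⬝ᵥ Fin.append u' v' = u ⬝ᵥ u' + v ⬝ᵥ v' := by
  simp [dotProduct, Fin.sum_univ_add]

theorem Fin.append_eq_zero_iff {α : Type*} [Zero α] {m n : ℕ} {u : Fin m → α}
    {v : Fin n → α} :
    Fin.append u v = 0 ↔ u = 0 ∧ v = 0 := by
  constructor
  · intro h
    exact ⟨funext fun i => by simpa using congrFun h (Fin.castAdd n i),
      funext fun i => by simpa using congrFun h (Fin.natAdd m i)⟩
  · rintro ⟨rfl, rfl⟩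
    funext i
    refine Fin.addCases (fun i => ?_) (fun i => ?_) i <;> simp

theorem mulVec_append_of_rows {α ι : Type*} [NonUnitalNonAssocSemiring α] {m n : ℕ}
    {X : Matrix ι (Fin (m + n)) α} {Z : Matrix ι (Fin m) α} {A : Matrix ι (Fin n) α}
    (hX : ∀ i, X i = Fin.append (Z i) (A i)) (u : Fin m → α) (v : Fin n → α) :
    X *ᵥ Fin.append u v = Z *ᵥ u + A *ᵥ v := by
  funext i
  simp only [mulVec, hX, Fin.dotProduct_append, Pi.add_apply]

theorem sub_mulVec_sub_mulVec_eq_sub_mulVec_append {α ι : Type*} [CommRing α] {m n : ℕ}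
    {X : Matrix ι (Fin (m + n)) α} {Z : Matrix ι (Fin m) α} {A : Matrix ι (Fin n) α}
    (hX : ∀ i, X i = Fin.append (Z i) (A i)) (y : ι → α) (β₀ β : Fin m → α) (γ : Fin n → α) :
    y - Z *ᵥ β - A *ᵥ γ = (y - Z *ᵥ β₀) - X *ᵥ Fin.append (β - β₀) γ := by
  rw [mulVec_append_of_rows hX, mulVec_sub]
  abel

section Orthogonality

variable {R ι n : Type*} [CommRing R] [Fintype n] (s : Finset ι) (w e : ι → R)
  (X : Matrix ι n R) (d : n → R)

theorem sum_mul_mulVec_eq_zero_of_orthogonal (h : ∀ j, ∑ i ∈ s, w i * e i * X i j = 0) :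
    ∑ i ∈ s, w i * e i * (X *ᵥ d) i = 0 := by
  calc ∑ i ∈ s, w i * e i * (X *ᵥ d) i
      = ∑ j, (∑ i ∈ s, w i * e i * X i j) * d j := by
        simp only [mulVec, dotProduct, Finset.mul_sum, Finset.sum_mul]
        rw [Finset.sum_comm]
        exact Finset.sum_congr rfl fun _ _ => Finset.sum_congr rfl fun _ _ => by ring
    _ = 0 := by simp [h]

theorem sum_weighted_sq_sub_mulVec_of_orthogonal (h : ∀ j, ∑ i ∈ s, w i * e i * X i j = 0) :
    ∑ i ∈ s, w i * (e - X *ᵥ d) i ^ 2 =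
      ∑ i ∈ s, w i * e i ^ 2 + ∑ i ∈ s, w i * (X *ᵥ d) i ^ 2 := by
  have cross := sum_mul_mulVec_eq_zero_of_orthogonal s w e X d h
  have expand : ∀ i ∈ s, w i * (e - X *ᵥ d) i ^ 2 =
      w i * e i ^ 2 + w i * (X *ᵥ d) i ^ 2 - 2 * (w i * e i * (X *ᵥ d) i) :=
    fun i _ => by rw [Pi.sub_apply]; ring
  rw [Finset.sum_congr rfl expand, Finset.sum_sub_distrib, Finset.sum_add_distrib,
    ← Finset.mul_sum, cross, mul_zero, sub_zero]

end Orthogonality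

section WeightedLeastSquares

variable {ι n : Type*} [Fintype n] {s : Finset ι} {w e : ι → ℝ} {X : Matrix ι n ℝ}

theorem weighted_mean_sq_le_of_orthogonal (hw : ∀ i ∈ s, 0 ≤ w i)
    (h : ∀ j, ∑ i ∈ s, w i * e i * X i j = 0) (d : n → ℝ) :
    (∑ i ∈ s, w i * e i ^ 2) / ∑ i ∈ s, w i ≤
      (∑ i ∈ s, w i * (e - X *ᵥ d) i ^ 2) / ∑ i ∈ s, w i := by
  refine div_le_div_of_nonneg_right ?_ (Finset.sum_nonneg hw)
  rw [sum_weighted_sq_sub_mulVec_of_orthogonal s w e X d h, le_add_iff_nonneg_right]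
  exact Finset.sum_nonneg fun i hi => mul_nonneg (hw i hi) (sq_nonneg _)

theorem dotProduct_transpose_mul_diagonal_mul_mulVec [Fintype ι] [DecidableEq ι] (v : n → ℝ) :
    v ⬝ᵥ ((Xᵀ * diagonal w * X) *ᵥ v) = ∑ i, w i * (X *ᵥ v) i ^ 2 := by
  rw [Matrix.mul_assoc, ← mulVec_mulVec, ← mulVec_mulVec, dotProduct_mulVec, vecMul_transpose]
  simp only [dotProduct, mulVec_diagonal]
  exact Finset.sum_congr rfl fun i _ => by ring

theorem weighted_mean_sq_lt_of_orthogonal_of_posDef [Fintype ι] [DecidableEq ι]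
    (hw : ∀ i, 0 ≤ w i) (h : ∀ j, ∑ i, w i * e i * X i j = 0)
    (hX : (Xᵀ * diagonal w * X).PosDef) {d : n → ℝ} (hd : d ≠ 0) :
    (∑ i, w i * e i ^ 2) / ∑ i, w i < (∑ i, w i * (e - X *ᵥ d) i ^ 2) / ∑ i, w i := by
  have hfit : 0 < ∑ i, w i * (X *ᵥ d) i ^ 2 := by
    rw [← dotProduct_transpose_mul_diagonal_mul_mulVec]
    exact hX.dotProduct_mulVec_pos hd
  obtain ⟨i, -, hi⟩ := Finset.exists_ne_zero_of_sum_ne_zero hfit.ne'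
  have hmass : 0 < ∑ i, w i := Finset.sum_pos' (fun i _ => hw i)
    ⟨i, Finset.mem_univ i, (hw i).lt_of_ne' (left_ne_zero_of_mul hi)⟩
  refine div_lt_div_of_pos_right ?_ hmass
  rw [sum_weighted_sq_sub_mulVec_of_orthogonal _ w e X d h]
  exact lt_add_of_pos_right _ hfit

end WeightedLeastSquares

theorem amtma_minimax_consistency_null_anchor_general
    {K G p q : ℕ} [Nonempty (Fin G)]
    (y : Fin K → ℝ) (Z : Matrix (Fin K) (Fin p) ℝ) (A : Matrix (Fin K) (Fin q) ℝ)
    (w : Fin K → ℝ) (hw : ∀ i, 0 < w i)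
    (reg : Fin K → Fin G)
    (βs : Fin p → ℝ)
    (X : Matrix (Fin K) (Fin (p + q)) ℝ)
    (hX : ∀ i, X i = Fin.append (Z i) (A i))
    (ε : Fin K → ℝ)
    (hε : ∀ i, ε i = y i - ∑ k, Z i k * βs k)
    (horth : ∀ (g : Fin G) (j : Fin (p + q)),
      ∑ i ∈ Finset.univ.filter (fun i => reg i = g), w i * ε i * X i j = 0)
    (r : (Fin p → ℝ) → (Fin q → ℝ) → Fin K → ℝ)
    (hr : ∀ β γ i, r β γ i = y i - ∑ k, Z i k * β k - ∑ k, A i k * γ k)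
    (Lavg : (Fin p → ℝ) → (Fin q → ℝ) → ℝ)
    (hLavg : ∀ β γ, Lavg β γ = (∑ i, w i * (r β γ i) ^ 2) / (∑ i, w i))
    (Lg : Fin G → (Fin p → ℝ) → (Fin q → ℝ) → ℝ)
    (hLg : ∀ g β γ, Lg g β γ =
      (∑ i ∈ Finset.univ.filter (fun i => reg i = g), w i * (r β γ i) ^ 2) /
      (∑ i ∈ Finset.univ.filter (fun i => reg i = g), w i))
    (Lmax : (Fin p → ℝ) → (Fin q → ℝ) → ℝ)
    (hLmax : ∀ β γ, Lmax β γ =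
      Finset.univ.sup' Finset.univ_nonempty (fun g : Fin G => Lg g β γ))
    (ρ lγ : ℝ) (hρ : ρ ∈ Set.Icc (0 : ℝ) 1) (hlγ : 0 ≤ lγ)
    (F : (Fin p → ℝ) → (Fin q → ℝ) → ℝ)
    (hF : ∀ β γ, F β γ =
      (1 - ρ) * Lavg β γ + ρ * Lmax β γ + lγ * ∑ j, (γ j) ^ 2) :
    (∀ β γ, F βs 0 ≤ F β γ) ∧
    (ρ < 1 → (Xᵀ * Matrix.diagonal w * X).PosDef →
      ∀ β γ, (β, γ) ≠ (βs, (0 : Fin q → ℝ)) → F βs 0 < F β γ) := by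
  obtain ⟨hρ0, hρ1⟩ := hρ
  have hres : ∀ β γ, r β γ = ε - X *ᵥ Fin.append (β - βs) γ := by
    intro β γ
    funext i
    rw [hr, Pi.sub_apply, hε]
    exact congrFun (sub_mulVec_sub_mulVec_eq_sub_mulVec_append hX y βs β γ) i
  have hres0 : r βs 0 = ε := by
    rw [hres, sub_self, Fin.append_eq_zero_iff.mpr ⟨rfl, rfl⟩, mulVec_zero, sub_zero]
  have horth_all : ∀ j, ∑ i, w i * ε i * X i j = 0 := fun j => by
    rw [← Finset.sum_fiberwise Finset.univ reg]
    exact Finset.sum_eq_zero fun g _ => horth g j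
  have hLavg_le : ∀ β γ, Lavg βs 0 ≤ Lavg β γ := fun β γ => by
    rw [hLavg, hLavg, hres0, hres]
    exact weighted_mean_sq_le_of_orthogonal (fun i _ => (hw i).le) horth_all _
  have hLmax_le : ∀ β γ, Lmax βs 0 ≤ Lmax β γ := fun β γ => by
    rw [hLmax, hLmax]
    refine Finset.sup'_mono_fun fun g _ => ?_
    rw [hLg, hLg, hres0, hres]
    exact weighted_mean_sq_le_of_orthogonal (fun i _ => (hw i).le) (horth g) _
  have hpen : ∀ γ : Fin q → ℝ, 0 ≤ lγ * ∑ j, γ j ^ 2 := fun γ =>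
    mul_nonneg hlγ (Finset.sum_nonneg fun j _ => sq_nonneg _)
  have hF0 : F βs 0 = (1 - ρ) * Lavg βs 0 + ρ * Lmax βs 0 := by simp [hF]
  refine ⟨fun β γ => ?_, fun hρlt hpd β γ hne => ?_⟩
  · rw [hF0, hF]
    nlinarith [hLavg_le β γ, hLmax_le β γ, hpen γ]
  · have hδ : Fin.append (β - βs) γ ≠ 0 := by
      rw [Ne, Fin.append_eq_zero_iff, sub_eq_zero]
      exact fun h => hne (Prod.ext h.1 h.2)
    have hLavg_lt : Lavg βs 0 < Lavg β γ := by
      rw [hLavg, hLavg, hres0, hres]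
      exact weighted_mean_sq_lt_of_orthogonal_of_posDef (fun i => (hw i).le) horth_all hpd hδ
    rw [hF0, hF]
    nlinarith [hLmax_le β γ, hpen γ]

/-- Finite-trial consistency of the AMT-MA blended objective with the hard
worst-regime (minimax) loss when the anchor is null: under within-regime
weighted orthogonality of the residuals `ε = y - Zβ⋆` to the joint design
`X = [Z A]`, the point `(β⋆, 0)` globally minimises
`F(β,γ) = (1-ρ) L_avg + ρ L_max + λ_γ ‖γ‖²` for every `ρ ∈ [0,1]`, `λ_γ ≥ 0`;
and if `ρ < 1` and `XᵀWX` is positive definite, it is the unique minimiser. -/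
theorem amtma_minimax_consistency_null_anchor
    {K G p q : ℕ} [Nonempty (Fin G)]
    (y : Fin K → ℝ) (Z : Matrix (Fin K) (Fin p) ℝ) (A : Matrix (Fin K) (Fin q) ℝ)
    (w : Fin K → ℝ) (hw : ∀ i, 0 < w i)
    (reg : Fin K → Fin G) (hreg : ∀ g : Fin G, ∃ i, reg i = g)
    (βs : Fin p → ℝ)
    (X : Matrix (Fin K) (Fin (p + q)) ℝ)
    (hX : ∀ i, X i = Fin.append (Z i) (A i))
    (ε : Fin K → ℝ)
    (hε : ∀ i, ε i = y i - ∑ k, Z i k * βs k)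
    (horth : ∀ (g : Fin G) (j : Fin (p + q)),
      ∑ i ∈ Finset.univ.filter (fun i => reg i = g), w i * ε i * X i j = 0)
    (r : (Fin p → ℝ) → (Fin q → ℝ) → Fin K → ℝ)
    (hr : ∀ β γ i, r β γ i = y i - ∑ k, Z i k * β k - ∑ k, A i k * γ k)
    (Lavg : (Fin p → ℝ) → (Fin q → ℝ) → ℝ)
    (hLavg : ∀ β γ, Lavg β γ = (∑ i, w i * (r β γ i) ^ 2) / (∑ i, w i))
    (Lg : Fin G → (Fin p → ℝ) → (Fin q → ℝ) → ℝ)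
    (hLg : ∀ g β γ, Lg g β γ =
      (∑ i ∈ Finset.univ.filter (fun i => reg i = g), w i * (r β γ i) ^ 2) /
      (∑ i ∈ Finset.univ.filter (fun i => reg i = g), w i))
    (Lmax : (Fin p → ℝ) → (Fin q → ℝ) → ℝ)
    (hLmax : ∀ β γ, Lmax β γ =
      Finset.univ.sup' Finset.univ_nonempty (fun g : Fin G => Lg g β γ))
    (ρ lγ : ℝ) (hρ : ρ ∈ Set.Icc (0 : ℝ) 1) (hlγ : 0 ≤ lγ)
    (F : (Fin p → ℝ) → (Fin q → ℝ) → ℝ)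
    (hF : ∀ β γ, F β γ =
      (1 - ρ) * Lavg β γ + ρ * Lmax β γ + lγ * ∑ j, (γ j) ^ 2) :
    (∀ β γ, F βs 0 ≤ F β γ) ∧
    (ρ < 1 → (Xᵀ * Matrix.diagonal w * X).PosDef →
      ∀ β γ, (β, γ) ≠ (βs, (0 : Fin q → ℝ)) → F βs 0 < F β γ) :=
  amtma_minimax_consistency_null_anchor_general y Z A w hw reg βs X hX ε hε horth r hr Lavg hLavg Lg
    hLg Lmax hLmax ρ lγ hρ hlγ F hF
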